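/- Fix e ≥ 2 and a partition λ of n, and let r be at least the number of parts of λ. Starting from the β-set B_r(λ), perform upward bead moves (each replacing an element b ≥ e by b − e when b − e is absent) until no further move is possible. Then: the terminal β-set does not depend on the order in which the moves are performed; every maximal sequence of moves has the same length w (the e-weight of λ); the partition determined by the terminal β-set (the e-core of λ) does not depend on the choice of r; and n equals the size of the e-core plus w·e. -/

import Mathlib

/-- A partition, recorded by its (1-indexed) sequence of parts: weakly decreasing from
index `1` on, eventually zero, with the unused index `0` set to `0`. -/
structure Ptn where
  parts : ℕ → ℕ
  zero_at_zero : parts 0 = 0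
  antitone : ∀ ⦃i j : ℕ⦄, 1 ≤ i → i ≤ j → parts j ≤ parts i
  eventually_zero : ∃ N : ℕ, ∀ i : ℕ, N ≤ i → parts i = 0

namespace Ptn

/-- The number of (nonzero) parts. -/
noncomputable def numParts (l : Ptn) : ℕ :=
  sInf {N : ℕ | ∀ i : ℕ, N < i → l.parts i = 0}

/-- The size `|λ|`, i.e. the integer that `λ` is a partition of. -/
noncomputable def size (l : Ptn) : ℕ :=
  ∑ i ∈ Finset.Icc 1 l.numParts, l.parts i

/-- The β-set `B_r(λ) = {λ_i + r - i : 1 ≤ i ≤ r}` of `λ` with `r` beads. -/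
def betaSet (l : Ptn) (r : ℕ) : Finset ℕ :=
  (Finset.Icc 1 r).image fun i => l.parts i + r - i

end Ptn

/-- The β-set of the `e`-core: push all beads on each runner as high as possible. -/
def coreBeta (e : ℕ) (B : Finset ℕ) : Finset ℕ :=
  (Finset.range e).biUnion fun k =>
    (Finset.range ((B.filter fun x => x % e = k).card)).image fun j => j * e + k

/-- The `e`-weight of the abacus display `B`. -/
def eWeight (e : ℕ) (B : Finset ℕ) : ℕ :=
  ((∑ b ∈ B, b) - ∑ b ∈ coreBeta e B, b) / e

/-- Two partitions have the same `e`-core. -/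
def SameCore (e : ℕ) (l m : Ptn) : Prop :=
  ∀ r : ℕ, l.numParts ≤ r → m.numParts ≤ r →
    coreBeta e (l.betaSet r) = coreBeta e (m.betaSet r)

/-- `λ` is `e`-regular: it has no `e` equal nonzero parts. -/
def Regular (e : ℕ) (l : Ptn) : Prop :=
  ∀ i : ℕ, 1 ≤ i → l.parts i ≠ 0 → l.parts (i + e - 1) < l.parts i

/-- The sign (if any) contributed by row `x` to the `k`-signature of the display `B`:
`some false` is a `−` (bead on runner `k`, none on runner `k-1`),
`some true` is a `+` (bead on runner `k-1`, none on runner `k`). -/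
def signAt (e k : ℕ) (B : Finset ℕ) (x : ℕ) : Option Bool :=
  if x * e + k ∈ B ∧ x * e + (k - 1) ∉ B then some false
  else if x * e + (k - 1) ∈ B ∧ x * e + k ∉ B then some true
  else none

/-- The `k`-signature of the display `B`, reading rows from top to bottom. -/
def signature (e k : ℕ) (B : Finset ℕ) : List Bool :=
  (List.range (B.sup id / e + 1)).filterMap (signAt e k B)

/-- Successively delete adjacent `−+` pairs until none remain. -/
def reduceSig : List Bool → List Bool
  | [] => []
  | s :: rest =>
    match reduceSig rest with
    | [] => [s]
    | t :: rest' => if s = false ∧ t = true then rest' else s :: t :: rest'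

/-- The number of `−` signs in the reduced `k`-signature of `B`,
i.e. the number of normal beads on runner `k`. -/
def normalCount (e k : ℕ) (B : Finset ℕ) : ℕ :=
  (reduceSig (signature e k B)).count false

/-- The abacus display with `e` runners whose beads on runner `k` sit in the rows `rows k`. -/
def runnerBeta (e : ℕ) (rows : ℕ → Finset ℕ) : Finset ℕ :=
  (Finset.range e).biUnion fun k => (rows k).image fun y => y * e + k

/-- Rows of a 5-bead runner carrying the empty partition. -/
def rowsEmpty : Finset ℕ := {0, 1, 2, 3, 4}
/-- Rows of a 5-bead runner carrying the partition `(3,2)`. -/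
def rows32 : Finset ℕ := {0, 1, 2, 5, 7}
/-- Rows of a 5-bead runner carrying the partition `(2,2)`. -/
def rows22 : Finset ℕ := {0, 1, 2, 5, 6}
/-- Rows of a 5-bead runner carrying the partition `(1)`. -/
def rows1 : Finset ℕ := {0, 1, 2, 3, 5}
/-- Rows of a 5-bead runner carrying the partition `(5)`. -/
def rows5 : Finset ℕ := {0, 1, 2, 3, 9}
/-- Rows of a 5-bead runner carrying the partition `(4)`. -/
def rows4 : Finset ℕ := {0, 1, 2, 3, 8}

/-- The β-set (with `5e` beads) of `⟨i_{3,2}⟩`. -/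
def shape32 (e i : ℕ) : Finset ℕ :=
  runnerBeta e fun k => if k = i then rows32 else rowsEmpty

/-- The β-set (with `5e` beads) of `⟨i_{2²}, j⟩`. -/
def shapeA (e i j : ℕ) : Finset ℕ :=
  runnerBeta e fun k => if k = i then rows22 else if k = j then rows1 else rowsEmpty

/-- The β-set (with `5e` beads) of `⟨j, i_{2²}⟩`. -/
def shapeB (e j i : ℕ) : Finset ℕ :=
  runnerBeta e fun k => if k = j then rows1 else if k = i then rows22 else rowsEmpty

/-- The β-set (with `5e` beads) of `⟨i_5⟩`. -/
def shape5 (e i : ℕ) : Finset ℕ :=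
  runnerBeta e fun k => if k = i then rows5 else rowsEmpty

/-- The β-set (with `5e` beads) of `⟨i_4, i+1⟩`. -/
def shape41 (e i : ℕ) : Finset ℕ :=
  runnerBeta e fun k => if k = i then rows4 else if k = i + 1 then rows1 else rowsEmpty

/-- The β-set (with `5e` beads) of `⟨0, i_4⟩`. -/
def shape04 (e i : ℕ) : Finset ℕ :=
  runnerBeta e fun k => if k = 0 then rows1 else if k = i then rows4 else rowsEmpty

/-- The `e`-weight of the bead at position `a` of the display `B`. -/
def beadWt (e : ℕ) (B : Finset ℕ) (a : ℕ) : ℕ :=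
  ((Finset.Icc 1 (a / e)).filter fun j => a - j * e ∉ B).card

/-- The induced `e`-sequence of the display `B`, as a multiset:
each bead of positive weight `w` at position `a` contributes `a, a-e, …, a-(w-1)e`. -/
def indSeq (e : ℕ) (B : Finset ℕ) : Multiset ℕ :=
  B.val.bind fun a => (Multiset.range (beadWt e B a)).map fun u => a - u * e

/-- The product order `λ ≤_P μ`. -/
def ProdLE (e : ℕ) (l m : Ptn) : Prop :=
  l.size = m.size ∧ SameCore e l m ∧
  (∀ r : ℕ, l.numParts ≤ r → m.numParts ≤ r →
    eWeight e (l.betaSet r) = eWeight e (m.betaSet r)) ∧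
  ∃ N₀ : ℕ, ∀ N : ℕ, N₀ ≤ N → l.numParts ≤ N → m.numParts ≤ N →
    List.Forall₂ (· ≤ ·) (Multiset.sort (indSeq e (l.betaSet N)) (· ≤ ·))
      (Multiset.sort (indSeq e (m.betaSet N)) (· ≤ ·))

/-- The dominance order `λ ⊴ μ`. -/
def Dom (l m : Ptn) : Prop :=
  ∀ t : ℕ, ∑ i ∈ Finset.Icc 1 t, l.parts i ≤ ∑ i ∈ Finset.Icc 1 t, m.parts i

/-- `λ →^σ τ` on displays with `k` beads. -/
def JStep (e k : ℕ) (l τ : Ptn) : Prop :=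
  l.numParts ≤ k ∧ τ.numParts ≤ k ∧
  ∃ (σ : Finset ℕ) (a b i : ℕ), 1 ≤ i ∧ a < b ∧
    a ∈ l.betaSet k ∧ i * e ≤ a ∧ a - i * e ∉ l.betaSet k ∧
    σ = insert (a - i * e) ((l.betaSet k).erase a) ∧
    i * e ≤ b ∧ b - i * e ∈ σ ∧ b ∉ σ ∧
    τ.betaSet k = insert b (σ.erase (b - i * e))

/-- `λ → τ`: `λ →^σ τ` for some `σ` (on some common number of beads). -/
def JRel (e : ℕ) (l τ : Ptn) : Prop := ∃ k : ℕ, JStep e k l τ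

/-- The Jantzen order `≤_J`: reflexive-transitive closure of `→`. -/
def JLE (e : ℕ) : Ptn → Ptn → Prop := Relation.ReflTransGen (JRel e)

/-- One upward bead move on a β-set. -/
def Step (e : ℕ) (B B' : Finset ℕ) : Prop :=
  ∃ b ∈ B, e ≤ b ∧ b - e ∉ B ∧ B' = insert (b - e) (B.erase b)

/-- No upward bead move is possible. -/
def Terminal (e : ℕ) (B : Finset ℕ) : Prop := ∀ b ∈ B, e ≤ b → b - e ∈ B

/-- `B` is the β-set of `μ` with `r` beads. -/
def IsBetaOf (B : Finset ℕ) (r : ℕ) (μ : Ptn) : Prop :=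
  μ.numParts ≤ r ∧ μ.betaSet r = B

/-- The number of beads of the display `B` on runner `i`. -/
def cnt (e : ℕ) (B : Finset ℕ) (i : ℕ) : ℕ := (B.filter fun x => x % e = i).card

/-- The set of rows of the display `B` occupied by beads on runner `i`. -/
def rowsOf (e : ℕ) (B : Finset ℕ) (i : ℕ) : Finset ℕ :=
  (B.filter fun x => x % e = i).image fun x => x / e

/-- `ν²`: the partition obtained by removing the first part. -/
def Ptn.tail (l : Ptn) : Ptn where
  parts := fun i => if i = 0 then 0 else l.parts (i + 1)
  zero_at_zero := rfl
  antitone := by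
    intro i j hi hij
    try dsimp only
    rw [if_neg (by omega : i ≠ 0), if_neg (by omega : j ≠ 0)]
    exact l.antitone (by omega) (by omega)
  eventually_zero := by
    obtain ⟨N, hN⟩ := l.eventually_zero
    refine ⟨N + 1, fun i hi => ?_⟩
    try dsimp only
    rw [if_neg (by omega : i ≠ 0)]
    exact hN _ (by omega)

/-
Every upward move keeps the number of beads on each runner (residue class mod `e`) and lowers
the bead sum by `e`. A β-set admitting no move has the beads of each runner in its top rows, so
it is determined by the runner counts: it is `coreBeta e B`. Hence every maximal sequence of
moves from `B` ends at `coreBeta e B` and has length `(∑ B - ∑ coreBeta e B) / e`; as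
`∑ B_r(λ) = |λ| + ∑_{i=1}^{r} (r - i)` for every partition, this gives `n = |core| + w e`.
Passing from `r` to `r + 1` beads shifts every bead down and adds one at `0`; this commutes with
moves and preserves terminality, hence commutes with taking cores, so the core does not depend
on `r`.
-/

section Moves

variable {e : ℕ}

lemma Step.cnt_eq {B B' : Finset ℕ} (h : Step e B B') (k : ℕ) : cnt e B' k = cnt e B k := by
  obtain ⟨b, hb, hbe, hnb, rfl⟩ := h
  have hmod : (b - e) % e = b % e := by
    conv_rhs => rw [← Nat.sub_add_cancel hbe, Nat.add_mod_right]
  unfold cnt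
  rw [Finset.filter_insert, Finset.filter_erase]
  by_cases hk : b % e = k
  · have hbk : b ∈ B.filter (· % e = k) := Finset.mem_filter.mpr ⟨hb, hk⟩
    rw [if_pos (hmod.trans hk), Finset.card_insert_of_notMem fun h' => hnb (by
      simpa using (Finset.mem_filter.mp (Finset.mem_of_mem_erase h')).1),
      Finset.card_erase_add_one hbk]
  · rw [if_neg (hmod.trans_ne hk), Finset.erase_eq_of_notMem (s := B.filter (· % e = k))
      fun h' => hk (Finset.mem_filter.mp h').2]

lemma Step.coreBeta_eq {B B' : Finset ℕ} (h : Step e B B') : coreBeta e B' = coreBeta e B :=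
  Finset.biUnion_congr rfl fun k _ =>
    congrArg (fun c => (Finset.range c).image fun j => j * e + k) (h.cnt_eq k)

lemma Step.sum_add {B B' : Finset ℕ} (h : Step e B B') :
    ∑ x ∈ B', x + e = ∑ x ∈ B, x := by
  obtain ⟨b, hb, hbe, hnb, rfl⟩ := h
  rw [Finset.sum_insert fun h' => hnb (Finset.mem_of_mem_erase h'), ← Finset.add_sum_erase B _ hb]
  omega

lemma List.IsChain.coreBeta_eq_and_sum {L : List (Finset ℕ)} (hL : L.IsChain (Step e))
    {B C : Finset ℕ} (hB : L.head? = some B) (hC : L.getLast? = some C) :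
    coreBeta e C = coreBeta e B ∧ ∑ x ∈ B, x = ∑ x ∈ C, x + (L.length - 1) * e := by
  induction L generalizing B with
  | nil => simp at hB
  | cons A L ih =>
    obtain rfl : A = B := by simpa using hB
    cases L with
    | nil =>
      obtain rfl : A = C := by simpa using hC
      simp
    | cons A' L =>
      rw [List.isChain_cons_cons] at hL
      rw [List.getLast?_cons_cons] at hC
      obtain ⟨hcore, hsum⟩ := ih hL.2 rfl hC
      have := hL.1.sum_add
      refine ⟨hcore.trans hL.1.coreBeta_eq, ?_⟩
      simp only [List.length_cons, Nat.add_sub_cancel] at hsum ⊢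
      rw [add_mul, one_mul]
      omega

lemma exists_terminal_chain (he : 0 < e) (B : Finset ℕ) :
    ∃ (L : List (Finset ℕ)) (C : Finset ℕ),
      L.IsChain (Step e) ∧ L.head? = some B ∧ L.getLast? = some C ∧ Terminal e C := by
  induction hs : ∑ x ∈ B, x using Nat.strong_induction_on generalizing B with
  | _ s ih =>
    by_cases ht : Terminal e B
    · exact ⟨[B], B, List.isChain_singleton B, rfl, rfl, ht⟩
    simp only [Terminal, not_forall] at ht
    obtain ⟨b, hb, hbe, hnb⟩ := ht
    have hstep : Step e B (insert (b - e) (B.erase b)) := ⟨b, hb, hbe, hnb, rfl⟩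
    obtain ⟨L, C, hL, hhead, hlast, hC⟩ :=
      ih _ (by have := hstep.sum_add; omega) (insert (b - e) (B.erase b)) rfl
    obtain ⟨L, rfl⟩ := List.head?_eq_some_iff.mp hhead
    exact ⟨B :: _ :: L, C, hL.cons_cons hstep, rfl, by rwa [List.getLast?_cons_cons], hC⟩

lemma Terminal.sub_mul_mem {C : Finset ℕ} (ht : Terminal e C) {b : ℕ} (hb : b ∈ C) :
    ∀ j, j * e ≤ b → b - j * e ∈ C
  | 0, _ => by simpa using hb
  | j + 1, hj => by
    have := ht _ (sub_mul_mem ht hb j ((Nat.mul_le_mul_right e j.le_succ).trans hj))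
      (by rw [add_mul] at hj; omega)
    rwa [Nat.sub_sub, ← add_one_mul] at this

lemma mem_coreBeta (he : 0 < e) {B : Finset ℕ} {x : ℕ} :
    x ∈ coreBeta e B ↔ x / e < cnt e B (x % e) := by
  simp only [coreBeta, Finset.mem_biUnion, Finset.mem_range, Finset.mem_image]
  constructor
  · rintro ⟨k, hk, j, hj, rfl⟩
    rwa [Nat.mul_add_mod_of_lt hk, Nat.mul_comm, Nat.mul_add_div he, Nat.div_eq_of_lt hk, add_zero]
  · intro h
    exact ⟨x % e, Nat.mod_lt x he, x / e, h, by rw [Nat.mul_comm]; exact Nat.div_add_mod x e⟩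

lemma card_coreBeta (he : 0 < e) (B : Finset ℕ) : (coreBeta e B).card = B.card := by
  have hdisj : (↑(Finset.range e) : Set ℕ).PairwiseDisjoint fun k =>
      (Finset.range (B.filter fun x => x % e = k).card).image fun j => j * e + k := by
    intro k hk k' hk' hne
    refine Finset.disjoint_left.mpr fun x hx hx' => hne ?_
    obtain ⟨j, -, rfl⟩ := Finset.mem_image.mp hx
    obtain ⟨j', -, h⟩ := Finset.mem_image.mp hx'
    have := congrArg (· % e) h
    simp only [Nat.mul_add_mod_of_lt (Finset.mem_range.mp hk),
      Nat.mul_add_mod_of_lt (Finset.mem_range.mp hk')] at this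
    exact this.symm
  rw [coreBeta, Finset.card_biUnion hdisj, Finset.card_eq_sum_card_fiberwise (f := (· % e))
    (t := Finset.range e) fun x _ => Finset.mem_range.mpr (Nat.mod_lt x he)]
  refine Finset.sum_congr rfl fun k _ => ?_
  rw [Finset.card_image_of_injective _ fun i j h => Nat.eq_of_mul_eq_mul_right he
    (Nat.add_right_cancel h), Finset.card_range]

lemma Terminal.coreBeta_eq (he : 0 < e) {C : Finset ℕ} (ht : Terminal e C) :
    coreBeta e C = C := by
  refine Finset.eq_of_subset_of_card_le (fun x hx => ?_) (card_coreBeta he C).le |>.symm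
  have hle : ∀ j ∈ Finset.range (x / e + 1), j * e ≤ x := fun j hj =>
    (Nat.mul_le_mul_right e (Nat.lt_succ_iff.mp (Finset.mem_range.mp hj))).trans
      (Nat.div_mul_le_self x e)
  -- the beads `x, x - e, …, x - (x / e) e` all lie on the runner of `x`
  rw [mem_coreBeta he, Nat.lt_iff_add_one_le, ← Finset.card_range (x / e + 1)]
  refine Finset.card_le_card_of_injOn (fun j => x - j * e) (fun j hj => ?_)
    (fun i hi j hj hij => ?_)
  · refine Finset.mem_filter.mpr ⟨ht.sub_mul_mem hx j (hle j hj), ?_⟩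
    have := hle j hj
    rw [Nat.mul_comm] at this
    simpa only [Nat.mul_comm j] using Nat.sub_mul_mod this
  · have := hle i hi
    have := hle j hj
    exact Nat.eq_of_mul_eq_mul_right he (by simp only at hij; omega)

lemma List.IsChain.getLast_eq_coreBeta (he : 0 < e) {L : List (Finset ℕ)}
    (hL : L.IsChain (Step e)) {B C : Finset ℕ} (hB : L.head? = some B)
    (hC : L.getLast? = some C) (ht : Terminal e C) : C = coreBeta e B :=
  (ht.coreBeta_eq he).symm.trans (hL.coreBeta_eq_and_sum hB hC).1

end Moves

section AddBead

def addBead (B : Finset ℕ) : Finset ℕ := insert 0 (B.image (· + 1))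

variable {e : ℕ}

lemma Step.addBead {B B' : Finset ℕ} (h : Step e B B') :
    Step e (addBead B) (addBead B') := by
  obtain ⟨b, hb, hbe, hnb, rfl⟩ := h
  refine ⟨b + 1, Finset.mem_insert_of_mem (Finset.mem_image_of_mem _ hb), by omega, ?_, ?_⟩ <;>
    rw [show b + 1 - e = b - e + 1 by omega]
  · simpa [_root_.addBead] using hnb
  · rw [_root_.addBead, _root_.addBead, Finset.image_insert,
      Finset.image_erase (add_left_injective 1), Finset.erase_insert_of_ne (by omega),
      Finset.insert_comm]

lemma Terminal.addBead (he : 0 < e) {C : Finset ℕ} (ht : Terminal e C) :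
    Terminal e (addBead C) := by
  intro b hb hbe
  simp only [_root_.addBead, Finset.mem_insert, Finset.mem_image] at hb ⊢
  obtain rfl | ⟨c, hc, rfl⟩ := hb
  · omega
  · rcases Nat.lt_or_ge c e with hce | hce
    · left; omega
    · exact Or.inr ⟨c - e, ht c hc hce, by omega⟩

-- `addBead` maps a maximal sequence of moves from `B` to one from `addBead B`.
lemma coreBeta_addBead (he : 0 < e) (B : Finset ℕ) :
    coreBeta e (addBead B) = addBead (coreBeta e B) := by
  obtain ⟨L, C, hL, hB, hC, ht⟩ := exists_terminal_chain he B
  have hLmap : (L.map addBead).IsChain (Step e) :=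
    List.isChain_map_of_isChain addBead (fun _ _ h => h.addBead) hL
  have hCmap : (L.map addBead).getLast? = some (addBead C) := by rw [List.getLast?_map, hC]; rfl
  rw [← hLmap.getLast_eq_coreBeta he (by rw [List.head?_map, hB]; rfl) hCmap (ht.addBead he),
    hL.getLast_eq_coreBeta he hB hC ht]

end AddBead

namespace Ptn

lemma parts_eq_zero (l : Ptn) {i : ℕ} (hi : l.numParts < i) : l.parts i = 0 := by
  obtain ⟨N, hN⟩ := l.eventually_zero
  exact Nat.sInf_mem (s := {N : ℕ | ∀ i : ℕ, N < i → l.parts i = 0})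
    ⟨N, fun i hi => hN i hi.le⟩ i hi

lemma strictAntiOn_beta (l : Ptn) (r : ℕ) :
    StrictAntiOn (fun i => l.parts i + r - i) (Set.Icc 1 r) := by
  intro i hi j hj hij
  have := l.antitone hi.1 hij.le
  simp only [Set.mem_Icc] at hi hj ⊢
  omega

lemma coe_betaSet (l : Ptn) (r : ℕ) :
    (l.betaSet r : Set ℕ) = Set.range fun i : Fin r => l.parts (i + 1) + r - (i + 1) := by
  ext x
  simp only [betaSet, Finset.coe_image, Finset.coe_Icc, Set.mem_image, Set.mem_Icc,
    Set.mem_range]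
  constructor
  · rintro ⟨i, ⟨hi, hir⟩, rfl⟩
    exact ⟨⟨i - 1, by omega⟩, by simp only [Nat.sub_add_cancel hi]⟩
  · rintro ⟨i, rfl⟩
    exact ⟨i + 1, ⟨by omega, i.isLt⟩, rfl⟩

lemma eq_of_betaSet_eq {r : ℕ} {μ ν : Ptn} (hμ : μ.numParts ≤ r) (hν : ν.numParts ≤ r)
    (h : μ.betaSet r = ν.betaSet r) : μ = ν := by
  have hanti : ∀ l : Ptn, StrictAnti fun i : Fin r => l.parts (i + 1) + r - (i + 1) :=
    fun l i j hij => l.strictAntiOn_beta r ⟨by omega, i.isLt⟩ ⟨by omega, j.isLt⟩ (by simpa)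
  have hfun := ((hanti μ).range_inj (hanti ν)).mp (by rw [← coe_betaSet, ← coe_betaSet, h])
  have hparts : ∀ i, μ.parts i = ν.parts i := by
    rintro (_ | i)
    · rw [μ.zero_at_zero, ν.zero_at_zero]
    · rcases Nat.lt_or_ge i r with hir | hir
      · have := congrFun hfun ⟨i, hir⟩
        simp only at this
        omega
      · rw [μ.parts_eq_zero (by omega), ν.parts_eq_zero (by omega)]
  cases μ
  cases ν
  simp only [mk.injEq]
  exact funext hparts

lemma sum_betaSet (l : Ptn) {r : ℕ} (hr : l.numParts ≤ r) :
    ∑ x ∈ l.betaSet r, x = l.size + ∑ i ∈ Finset.Icc 1 r, (r - i) := by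
  rw [betaSet, Finset.sum_image fun i hi j hj => (l.strictAntiOn_beta r).injOn
    (by simpa using hi) (by simpa using hj)]
  rw [Finset.sum_congr rfl fun i hi => (by simp only [Finset.mem_Icc] at hi; omega :
    l.parts i + r - i = l.parts i + (r - i)), Finset.sum_add_distrib, size]
  congr 1
  refine (Finset.sum_subset (Finset.Icc_subset_Icc le_rfl hr) fun i hi hi' => ?_).symm
  simp only [Finset.mem_Icc] at hi hi'
  exact l.parts_eq_zero (by omega)

lemma betaSet_succ (l : Ptn) {s : ℕ} (hs : l.numParts ≤ s) :
    l.betaSet (s + 1) = addBead (l.betaSet s) := by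
  rw [betaSet, ← Finset.insert_Icc_right_eq_Icc_add_one (by omega), Finset.image_insert,
    l.parts_eq_zero (by omega : l.numParts < s + 1), betaSet, addBead, Finset.image_image,
    zero_add, Nat.sub_self]
  congr 1
  refine Finset.image_congr fun i hi => ?_
  simp only [Finset.coe_Icc, Set.mem_Icc] at hi
  simp only [Function.comp_apply]
  omega

lemma betaSet_eq_coreBeta_of_le {e : ℕ} (he : 0 < e) {l μ : Ptn} {s t : ℕ}
    (hl : l.numParts ≤ s) (hμ : μ.numParts ≤ s) (h : μ.betaSet s = coreBeta e (l.betaSet s))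
    (hst : s ≤ t) : μ.betaSet t = coreBeta e (l.betaSet t) := by
  induction t, hst using Nat.le_induction with
  | base => exact h
  | succ t hst ih =>
    rw [μ.betaSet_succ (hμ.trans hst), ih, l.betaSet_succ (hl.trans hst), coreBeta_addBead he]

lemma eq_of_isBetaOf_coreBeta {e : ℕ} (he : 0 < e) {l μ ν : Ptn} {r r' : ℕ}
    (hr : l.numParts ≤ r) (hr' : l.numParts ≤ r')
    (hμ : IsBetaOf (coreBeta e (l.betaSet r)) r μ)
    (hν : IsBetaOf (coreBeta e (l.betaSet r')) r' ν) : μ = ν := by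
  wlog hle : r ≤ r' generalizing r r' μ ν
  · exact (this hr' hr hν hμ (by omega)).symm
  exact eq_of_betaSet_eq (hμ.1.trans hle) hν.1
    ((betaSet_eq_coreBeta_of_le he hr hμ.1 hμ.2 hle).trans hν.2.symm)

end Ptn

/-- performing upward bead moves from `B_r(λ)` until none is possible, the
terminal β-set is independent of the order of the moves, every maximal sequence of moves
has the same length `w`, the partition determined by the terminal β-set is independent of
`r`, and `n` equals the size of that partition (the `e`-core) plus `w·e`. -/
theorem statement7 (e : ℕ) (he : 2 ≤ e) (n : ℕ) (l : Ptn) (hn : l.size = n)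
    (r : ℕ) (hr : l.numParts ≤ r) :
    ∃ (C : Finset ℕ) (w : ℕ),
      (∃ L : List (Finset ℕ), L.Chain' (Step e) ∧ L.head? = some (l.betaSet r) ∧
          L.getLast? = some C ∧ Terminal e C) ∧
      (∀ L : List (Finset ℕ), L.Chain' (Step e) → L.head? = some (l.betaSet r) →
          (∀ B : Finset ℕ, L.getLast? = some B → Terminal e B) →
          L.getLast? = some C ∧ L.length = w + 1) ∧
      (∀ r' : ℕ, l.numParts ≤ r' → ∀ C' : Finset ℕ,
          (∃ L : List (Finset ℕ), L.Chain' (Step e) ∧ L.head? = some (l.betaSet r') ∧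
            L.getLast? = some C' ∧ Terminal e C') →
          ∀ μ ν : Ptn, IsBetaOf C r μ → IsBetaOf C' r' ν → μ = ν) ∧
      (∀ μ : Ptn, IsBetaOf C r μ → n = μ.size + w * e) := by
  have he₀ : 0 < e := by omega
  obtain ⟨L₀, C, hL₀, hB₀, hC₀, ht₀⟩ := exists_terminal_chain he₀ (l.betaSet r)
  obtain rfl := hL₀.getLast_eq_coreBeta he₀ hB₀ hC₀ ht₀
  have hsum₀ := (hL₀.coreBeta_eq_and_sum hB₀ hC₀).2
  have hlen₀ : L₀ ≠ [] := by rintro rfl; simp at hB₀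
  refine ⟨_, L₀.length - 1, ⟨L₀, hL₀, hB₀, hC₀, ht₀⟩, fun L hL hB hlast => ?_,
    fun r' hr' C' ⟨L', hL', hB', hC', ht'⟩ μ ν hμ hν => ?_, fun μ hμ => ?_⟩
  · have hlen : L ≠ [] := by rintro rfl; simp at hB
    have hC := L.getLast?_eq_some_getLast hlen
    have hcore := hL.getLast_eq_coreBeta he₀ hB hC (hlast _ hC)
    have hsum := (hL.coreBeta_eq_and_sum hB hC).2
    rw [hcore] at hC hsum
    have hlen_eq :=
      Nat.eq_of_mul_eq_mul_right he₀ (Nat.add_left_cancel (hsum.symm.trans hsum₀))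
    have := L.length_pos_of_ne_nil hlen
    have := L₀.length_pos_of_ne_nil hlen₀
    exact ⟨hC, by omega⟩
  · obtain rfl := hL'.getLast_eq_coreBeta he₀ hB' hC' ht'
    exact Ptn.eq_of_isBetaOf_coreBeta he₀ hr hr' hμ hν
  · have hμsum := μ.sum_betaSet hμ.1
    rw [hμ.2] at hμsum
    have := l.sum_betaSet hr
    omega
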